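/- arXiv:1308.6196 — 2 statements merged into one kernel-verified Lean document; each statement's English description precedes it below -/
import Mathlib

section
/- Let g(z) = z^j h(z) on the unit disc D, where j ≥ 1 is an integer and h is holomorphic and nonvanishing on a neighborhood of the support of a smooth radial cutoff χ near 0. Then the function χ(z₁) |z₁|^{2j} conj(z₁)^j / h(z₁) belongs to the Sobolev space W^k(Ω_g) for every integer k ≥ 0, where Ω_g = {(z₁,z₂) : z₁ ∈ D, |z₂| < |g(z₁)|}, while the function 1/g(z₁) = 1/(z₁^j h(z₁)) does not belong to W¹(Ω_g). -/
open Metric MeasureTheory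
open scoped ENNReal NNReal

private lemma aux_smooth (j : ℕ) {h : ℂ → ℂ}
    (hhol : DifferentiableOn ℂ h (ball (0 : ℂ) 1))
    {χ : ℂ → ℝ} (hχs : ContDiff ℝ (⊤ : ℕ∞) χ) {U : Set ℂ} (hUo : IsOpen U)
    (hsub : tsupport χ ⊆ U) (hUb : U ⊆ ball (0 : ℂ) 1)
    (hne : ∀ z ∈ U, h z ≠ 0) :
    ContDiff ℝ ((⊤ : ℕ∞) : WithTop ℕ∞) (fun z : ℂ =>
      (χ z : ℂ) * ((‖z‖ ^ (2 * j) : ℝ) : ℂ) * (starRingEnd ℂ z) ^ j / h z) := by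
  rw [contDiff_iff_contDiffAt]
  intro z
  by_cases hz : z ∈ U
  · have hh : ContDiffAt ℝ ((⊤ : ℕ∞) : WithTop ℕ∞) h z :=
      (((hhol.analyticOnNhd isOpen_ball) z (hUb hz)).contDiffAt).restrict_scalars ℝ
    have h1 : ContDiffAt ℝ ((⊤ : ℕ∞) : WithTop ℕ∞) (fun w : ℂ => (χ w : ℂ)) z :=
      (Complex.ofRealCLM.contDiff.comp (hχs.of_le (by simp))).contDiffAt
    have h2 : ContDiffAt ℝ ((⊤ : ℕ∞) : WithTop ℕ∞)
        (fun w : ℂ => ((‖w‖ ^ (2 * j) : ℝ) : ℂ)) z := by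
      have heq : (fun w : ℂ => ((‖w‖ ^ (2 * j) : ℝ) : ℂ)) =
          fun w : ℂ => ((Complex.normSq w : ℝ) : ℂ) ^ j := by
        funext w
        rw [pow_mul, Complex.sq_norm]
        push_cast
        ring
      rw [heq]
      have hnsq : ContDiff ℝ ((⊤ : ℕ∞) : WithTop ℕ∞)
          (fun w : ℂ => ((Complex.normSq w : ℝ) : ℂ)) := by
        have : (fun w : ℂ => ((Complex.normSq w : ℝ) : ℂ)) =
            fun w : ℂ => ((w.re * w.re + w.im * w.im : ℝ) : ℂ) := by
          funext w; rw [Complex.normSq_apply]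
        rw [this]
        exact Complex.ofRealCLM.contDiff.comp
          ((Complex.reCLM.contDiff.mul Complex.reCLM.contDiff).add
            (Complex.imCLM.contDiff.mul Complex.imCLM.contDiff))
      exact (hnsq.pow j).contDiffAt
    have h3 : ContDiffAt ℝ ((⊤ : ℕ∞) : WithTop ℕ∞)
        (fun w : ℂ => (starRingEnd ℂ w) ^ j) z := by
      have : ContDiff ℝ ((⊤ : ℕ∞) : WithTop ℕ∞) (fun w : ℂ => starRingEnd ℂ w) := by
        have := (Complex.conjCLE : ℂ ≃L[ℝ] ℂ).contDiff
          (n := ((⊤ : ℕ∞) : WithTop ℕ∞))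
        exact this
      exact (this.pow j).contDiffAt
    have hdiv : ContDiffAt ℝ ((⊤ : ℕ∞) : WithTop ℕ∞) (fun w => (h w)⁻¹) z :=
      hh.inv (hne z hz)
    simp only [div_eq_mul_inv]
    exact ((h1.mul h2).mul h3).mul hdiv
  · have hz' : z ∈ (tsupport χ)ᶜ := fun hc => hz (hsub hc)
    have hev : (fun w : ℂ =>
        (χ w : ℂ) * ((‖w‖ ^ (2 * j) : ℝ) : ℂ) * (starRingEnd ℂ w) ^ j / h w)
        =ᶠ[nhds z] fun _ => (0 : ℂ) := by
      filter_upwards [(isClosed_tsupport χ).isOpen_compl.mem_nhds hz'] with w hw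
      simp [image_eq_zero_of_notMem_tsupport hw]
    exact contDiffAt_const.congr_of_eventuallyEq hev


private lemma aux_key (j : ℕ) (hj : 1 ≤ j) {h : ℂ → ℂ} {z w : ℂ}
    (hh : DifferentiableAt ℂ h z) (hz0 : z ≠ 0) (hhz : h z ≠ 0)
    {B c C : ℝ} (hc : 0 < c) (hB : 0 < B)
    (hhB : ‖h z‖ ≤ B) (hhc : c ≤ ‖h z‖) (hC : ‖deriv h z‖ ≤ C)
    (hsm : ‖z‖ * C ≤ j * c / 2) :
    (j * c / (2 * B ^ 2)) / ‖z‖ ^ (j + 1) ≤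
      ‖iteratedFDeriv ℝ 1 (fun q : ℂ × ℂ => 1 / (q.1 ^ j * h q.1)) (z, w)‖ := by
  have hz : (0:ℝ) < ‖z‖ := norm_pos_iff.mpr hz0
  set d : ℂ := -((j:ℂ) * z ^ (j - 1) * h z + z ^ j * deriv h z) / (z ^ j * h z) ^ 2 with hd
  have hg : HasDerivAt (fun w : ℂ => w ^ j * h w)
      ((j:ℂ) * z ^ (j - 1) * h z + z ^ j * deriv h z) z :=
    (hasDerivAt_pow j z).mul hh.hasDerivAt
  have hgz : z ^ j * h z ≠ 0 := mul_ne_zero (pow_ne_zero _ hz0) hhz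
  have hu : HasDerivAt (fun w : ℂ => (w ^ j * h w)⁻¹) d z := hg.inv hgz
  have hF : HasFDerivAt (fun q : ℂ × ℂ => (q.1 ^ j * h q.1)⁻¹)
      ((ContinuousLinearMap.restrictScalars ℝ
        ((1 : ℂ →L[ℂ] ℂ).smulRight d)).comp
        (ContinuousLinearMap.fst ℝ ℂ ℂ)) (z, w) :=
    HasFDerivAt.comp (g := fun w : ℂ => (w ^ j * h w)⁻¹) (f := Prod.fst) (z, w)
      (hu.hasFDerivAt.restrictScalars ℝ) hasFDerivAt_fst
  simp only [one_div]
  have hval : (iteratedFDeriv ℝ 1 (fun q : ℂ × ℂ => (q.1 ^ j * h q.1)⁻¹) (z, w))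
      (fun _ => ((1:ℂ), (0:ℂ))) = d := by
    rw [iteratedFDeriv_one_apply, hF.fderiv]
    simp
  have hle : ‖d‖ ≤ ‖iteratedFDeriv ℝ 1 (fun q : ℂ × ℂ => (q.1 ^ j * h q.1)⁻¹) (z, w)‖ := by
    have := (iteratedFDeriv ℝ 1 (fun q : ℂ × ℂ => (q.1 ^ j * h q.1)⁻¹) (z, w)).le_opNorm
      (fun _ => ((1:ℂ), (0:ℂ)))
    rw [hval] at this
    simpa [Prod.norm_def] using this
  refine le_trans ?_ hle
  -- now the scalar estimate
  have hjj : j - 1 + 1 = j := Nat.succ_pred_eq_of_pos hj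
  have ht : (0:ℝ) < ‖z‖ ^ (j - 1) := pow_pos hz _
  have hs : (0:ℝ) < ‖z‖ ^ (j + 1) := pow_pos hz _
  have hnum : j * c / 2 * ‖z‖ ^ (j - 1) ≤
      ‖(j:ℂ) * z ^ (j - 1) * h z + z ^ j * deriv h z‖ := by
    have tri : ‖(j:ℂ) * z ^ (j - 1) * h z‖ - ‖z ^ j * deriv h z‖ ≤
        ‖(j:ℂ) * z ^ (j - 1) * h z + z ^ j * deriv h z‖ := by
      have := norm_add_le ((j:ℂ) * z ^ (j - 1) * h z + z ^ j * deriv h z)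
        (-(z ^ j * deriv h z))
      simp only [add_neg_cancel_right, norm_neg] at this
      linarith
    have e1 : ‖(j:ℂ) * z ^ (j - 1) * h z‖ = j * ‖z‖ ^ (j - 1) * ‖h z‖ := by
      simp [norm_mul, norm_pow]
    have e2 : ‖z ^ j * deriv h z‖ = ‖z‖ ^ j * ‖deriv h z‖ := by
      simp [norm_mul, norm_pow]
    have e3 : ‖z‖ ^ j = ‖z‖ ^ (j - 1) * ‖z‖ := by
      have hp := pow_succ ‖z‖ (j - 1)
      rw [hjj] at hp
      exact hp
    have hCz : ‖z‖ ^ j * ‖deriv h z‖ ≤ ‖z‖ ^ (j - 1) * (‖z‖ * C) := by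
      rw [e3]
      have h7 : (0:ℝ) ≤ ‖z‖ ^ (j - 1) * ‖z‖ := by positivity
      nlinarith [mul_le_mul_of_nonneg_left hC h7]
    have hcz : j * ‖z‖ ^ (j - 1) * c ≤ j * ‖z‖ ^ (j - 1) * ‖h z‖ := by
      have : (0:ℝ) ≤ j * ‖z‖ ^ (j - 1) := by positivity
      nlinarith
    rw [e1, e2] at tri
    have h4 : ‖z‖ ^ (j - 1) * (‖z‖ * C) ≤ ‖z‖ ^ (j - 1) * (j * c / 2) := by
      nlinarith
    nlinarith
  have hden : ‖z ^ j * h z‖ ^ 2 ≤ B ^ 2 * (‖z‖ ^ (j - 1) * ‖z‖ ^ (j + 1)) := by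
    have e4 : ‖z‖ ^ (j - 1) * ‖z‖ ^ (j + 1) = ‖z‖ ^ (2 * j) := by
      rw [← pow_add]; congr 1; omega
    have : ‖z ^ j * h z‖ = ‖z‖ ^ j * ‖h z‖ := by simp [norm_mul, norm_pow]
    rw [this, e4, mul_pow, ← pow_mul]
    have h5 : ‖z‖ ^ (j * 2) = ‖z‖ ^ (2 * j) := by ring
    rw [h5]
    have h6 : ‖h z‖ ^ 2 ≤ B ^ 2 := by nlinarith [norm_nonneg (h z)]
    nlinarith [pow_pos hz (2 * j)]
  have hdpos : (0:ℝ) < ‖z ^ j * h z‖ ^ 2 := pow_pos (norm_pos_iff.mpr hgz) 2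
  have hnd : ‖d‖ = ‖(j:ℂ) * z ^ (j - 1) * h z + z ^ j * deriv h z‖ / ‖z ^ j * h z‖ ^ 2 := by
    rw [hd, norm_div, norm_neg, norm_pow]
  rw [hnd]
  calc (j * c / (2 * B ^ 2)) / ‖z‖ ^ (j + 1)
      = (j * c / 2 * ‖z‖ ^ (j - 1)) / (B ^ 2 * (‖z‖ ^ (j - 1) * ‖z‖ ^ (j + 1))) := by
        rw [show B ^ 2 * (‖z‖ ^ (j - 1) * ‖z‖ ^ (j + 1))
            = (B ^ 2 * ‖z‖ ^ (j + 1)) * ‖z‖ ^ (j - 1) by ring,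
          mul_div_mul_right _ _ (ne_of_gt ht), div_div, div_div]
        congr 1
        ring
    _ ≤ ‖(j:ℂ) * z ^ (j - 1) * h z + z ^ j * deriv h z‖ / ‖z ^ j * h z‖ ^ 2 :=
        div_le_div₀ (norm_nonneg _) hnum hdpos hden


private lemma aux_alg (j : ℕ) {κ c a : ℝ} (ha : 0 < a) :
    (κ / a ^ (j + 1)) ^ 2 *
      ((a ^ 2 * Real.pi - (a / 2) ^ 2 * Real.pi) * ((c * (a / 2) ^ j) ^ 2 * Real.pi))
    = κ ^ 2 * Real.pi ^ 2 * (3 / 4) * c ^ 2 / 2 ^ (2 * j) := by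
  have haj : a ^ j ≠ 0 := pow_ne_zero _ ha.ne'
  have h2j : (2:ℝ) ^ j ≠ 0 := by positivity
  rw [div_pow a 2 j, pow_succ, show 2 * j = j * 2 by ring, pow_mul]
  field_simp
  ring


/-- For `g(z) = z^j h(z)` with `h` holomorphic and nonvanishing near the support
of a smooth radial cutoff `χ` (which is `1` near `0`), the function
`χ(z₁)|z₁|^{2j} conj(z₁)^j / h(z₁)` belongs to every Sobolev space `W^k(Ω_g)`,
while `1/g(z₁)` fails to be in `W¹(Ω_g)`.  Sobolev membership is expressed via
square integrability of the iterated (real) Fréchet derivatives over `Ω_g`. -/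
theorem stmt12 (j : ℕ) (hj : 1 ≤ j) (h : ℂ → ℂ)
    (hhol : DifferentiableOn ℂ h (ball (0 : ℂ) 1))
    (hhb : ∃ B : ℝ, ∀ z ∈ ball (0 : ℂ) 1, ‖h z‖ ≤ B)
    (χ : ℂ → ℝ) (hχs : ContDiff ℝ (⊤ : ℕ∞) χ) (hχc : HasCompactSupport χ)
    (hχsupp : tsupport χ ⊆ ball (0 : ℂ) 1)
    (hχrad : ∀ z w : ℂ, ‖z‖ = ‖w‖ → χ z = χ w)
    (hχ1 : ∃ r : ℝ, 0 < r ∧ ∀ z ∈ ball (0 : ℂ) r, χ z = 1)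
    (hU : ∃ U : Set ℂ, IsOpen U ∧ tsupport χ ⊆ U ∧ U ⊆ ball (0 : ℂ) 1 ∧
      ∀ z ∈ U, h z ≠ 0)
    (Ω : Set (ℂ × ℂ))
    (hΩ : Ω = {p : ℂ × ℂ | p.1 ∈ ball (0 : ℂ) 1 ∧ ‖p.2‖ < ‖p.1 ^ j * h p.1‖}) :
    (∀ k i : ℕ, i ≤ k → IntegrableOn
      (fun p : ℂ × ℂ => ‖iteratedFDeriv ℝ i
        (fun q : ℂ × ℂ =>
          (χ q.1 : ℂ) * ((‖q.1‖ ^ (2 * j) : ℝ) : ℂ) *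
            (starRingEnd ℂ q.1) ^ j / h q.1) p‖ ^ 2) Ω volume) ∧
    ¬ IntegrableOn
      (fun p : ℂ × ℂ => ‖iteratedFDeriv ℝ 1
        (fun q : ℂ × ℂ => 1 / (q.1 ^ j * h q.1)) p‖ ^ 2) Ω volume := by
  obtain ⟨B, hB⟩ := hhb
  obtain ⟨U, hUo, hsubU, hUb, hne⟩ := hU
  have hB0 : 0 ≤ B := le_trans (norm_nonneg _) (hB 0 (mem_ball_self one_pos))
  -- boundedness of Ω
  have hΩb : Bornology.IsBounded Ω := by
    have : Ω ⊆ ball (0 : ℂ) 1 ×ˢ ball (0 : ℂ) (B + 1) := by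
      rintro ⟨z, w⟩ hp
      rw [hΩ] at hp
      obtain ⟨h1, h2⟩ := hp
      refine ⟨h1, ?_⟩
      rw [mem_ball_zero_iff]
      have hz1 : ‖z‖ < 1 := mem_ball_zero_iff.mp h1
      calc ‖w‖ < ‖z ^ j * h z‖ := h2
        _ = ‖z‖ ^ j * ‖h z‖ := by rw [norm_mul, norm_pow]
        _ ≤ 1 * B := by
            apply mul_le_mul _ (hB z h1) (norm_nonneg _) one_pos.le
            exact pow_le_one₀ (norm_nonneg _) hz1.le
        _ < B + 1 := by linarith
    exact (isBounded_ball.prod isBounded_ball).subset this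
  constructor
  · -- positive part
    intro k i _
    have hf : ContDiff ℝ ((⊤ : ℕ∞) : WithTop ℕ∞) (fun q : ℂ × ℂ =>
        (χ q.1 : ℂ) * ((‖q.1‖ ^ (2 * j) : ℝ) : ℂ) *
          (starRingEnd ℂ q.1) ^ j / h q.1) :=
      (aux_smooth j hhol hχs hUo hsubU hUb hne).comp contDiff_fst
    have hcont : Continuous (fun p : ℂ × ℂ => ‖iteratedFDeriv ℝ i
        (fun q : ℂ × ℂ =>
          (χ q.1 : ℂ) * ((‖q.1‖ ^ (2 * j) : ℝ) : ℂ) *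
            (starRingEnd ℂ q.1) ^ j / h q.1) p‖ ^ 2) := by
      exact ((hf.continuous_iteratedFDeriv (by exact_mod_cast le_top)).norm).pow 2
    exact ((hcont.continuousOn).integrableOn_compact
      hΩb.isCompact_closure).mono_set subset_closure
  · -- negative part
    intro hInt
    -- find a closed ball inside U around 0
    have h0U : (0 : ℂ) ∈ U := by
      obtain ⟨r₀, hr₀, hχone⟩ := hχ1
      apply hsubU
      apply subset_tsupport
      rw [Function.mem_support, hχone 0 (mem_ball_self hr₀)]
      exact one_ne_zero
    obtain ⟨ε, hε, hballU⟩ := Metric.isOpen_iff.mp hUo 0 h0U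
    have hr1pos : 0 < ε / 2 := by positivity
    set r1 := ε / 2 with hr1
    have hKU : closedBall (0 : ℂ) r1 ⊆ U :=
      (closedBall_subset_ball (by rw [hr1]; linarith)).trans hballU
    have hKb : closedBall (0 : ℂ) r1 ⊆ ball (0 : ℂ) 1 := hKU.trans hUb
    have hKc : IsCompact (closedBall (0 : ℂ) r1) := isCompact_closedBall _ _
    -- minimum of ‖h‖ on the closed ball
    obtain ⟨z₀, hz₀K, hz₀min⟩ := hKc.exists_isMinOn
      ⟨0, mem_closedBall_self hr1pos.le⟩ ((hhol.continuousOn.mono hKb).norm)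
    set c := ‖h z₀‖ with hcdef
    have hc : 0 < c := norm_pos_iff.mpr (hne z₀ (hKU hz₀K))
    have hcB : c ≤ B := hB z₀ (hKb hz₀K)
    have hBpos : 0 < B := lt_of_lt_of_le hc hcB
    -- bound for deriv h on the closed ball
    have hdc : ContinuousOn (deriv h) (closedBall (0 : ℂ) r1) :=
      (((hhol.analyticOnNhd isOpen_ball).deriv).continuousOn).mono hKb
    obtain ⟨C, hCb⟩ := hKc.exists_bound_of_continuousOn hdc
    set C' := max C 1 with hC'def
    have hC'pos : (0:ℝ) < C' := lt_of_lt_of_le one_pos (le_max_right _ _)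
    have hCb' : ∀ x ∈ closedBall (0 : ℂ) r1, ‖deriv h x‖ ≤ C' := fun x hx =>
      (hCb x hx).trans (le_max_left _ _)
    have hjpos : (0:ℝ) < j := by exact_mod_cast hj
    set r := min r1 (j * c / (2 * C')) with hrdef
    have hrpos : 0 < r := lt_min hr1pos (by positivity)
    have hrr1 : r ≤ r1 := min_le_left _ _
    set κ := (j : ℝ) * c / (2 * B ^ 2) with hκdef
    have hκpos : 0 < κ := div_pos (mul_pos hjpos hc) (by positivity)
    -- key pointwise lower bound
    have key : ∀ z w : ℂ, z ≠ 0 → ‖z‖ ≤ r →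
        κ / ‖z‖ ^ (j + 1) ≤
        ‖iteratedFDeriv ℝ 1 (fun q : ℂ × ℂ => 1 / (q.1 ^ j * h q.1)) (z, w)‖ := by
      intro z w hz0 hzr
      have hzK : z ∈ closedBall (0 : ℂ) r1 := by
        rw [mem_closedBall_zero_iff]; exact hzr.trans hrr1
      have hzb : z ∈ ball (0 : ℂ) 1 := hKb hzK
      refine aux_key j hj (hhol.differentiableAt (isOpen_ball.mem_nhds hzb)) hz0
        (hne z (hKU hzK)) hc hBpos (hB z hzb) (hz₀min hzK) (hCb' z hzK) ?_
      have hrle : r ≤ j * c / (2 * C') := min_le_right _ _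
      calc ‖z‖ * C' ≤ (j * c / (2 * C')) * C' :=
            mul_le_mul_of_nonneg_right (hzr.trans hrle) hC'pos.le
        _ = j * c / 2 := by field_simp
    -- the annuli and product sets
    set R : ℕ → ℝ := fun n => r / 2 ^ n with hRdef
    have hRpos : ∀ n, 0 < R n := fun n => by simp only [hRdef]; positivity
    have hRle : ∀ n, R n ≤ r := fun n => by
      simp only [hRdef]
      exact div_le_self hrpos.le (one_le_pow₀ one_le_two)
    have hRsucc : ∀ n, R (n + 1) = R n / 2 := fun n => by
      simp only [hRdef]; rw [pow_succ, ← div_div]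
    have hRanti : ∀ m n, m ≤ n → R n ≤ R m := fun m n hmn => by
      simp only [hRdef]
      exact div_le_div_of_nonneg_left hrpos.le (by positivity)
        (pow_le_pow_right₀ one_le_two hmn)
    set S : ℕ → Set (ℂ × ℂ) := fun n =>
      (ball (0 : ℂ) (R n) \ ball (0 : ℂ) (R (n + 1))) ×ˢ
        ball (0 : ℂ) (c * R (n + 1) ^ j) with hSdef
    have hSmeas : ∀ n, MeasurableSet (S n) := fun n =>
      (measurableSet_ball.diff measurableSet_ball).prod measurableSet_ball
    have hSsub : ∀ n, S n ⊆ Ω := by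
      rintro n ⟨z, w⟩ ⟨⟨hzin, hznot⟩, hw⟩
      rw [hΩ]
      have hz1 : ‖z‖ < R n := mem_ball_zero_iff.mp hzin
      have hz2 : R (n + 1) ≤ ‖z‖ := le_of_not_gt (fun hlt => hznot (mem_ball_zero_iff.mpr hlt))
      have hzK : z ∈ closedBall (0 : ℂ) r1 := by
        rw [mem_closedBall_zero_iff]
        exact (hz1.le.trans (hRle n)).trans hrr1
      refine ⟨hKb hzK, ?_⟩
      have hw1 : ‖w‖ < c * R (n + 1) ^ j := mem_ball_zero_iff.mp hw
      have hch : c ≤ ‖h z‖ := hz₀min hzK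
      calc ‖w‖ < c * R (n + 1) ^ j := hw1
        _ ≤ ‖h z‖ * ‖z‖ ^ j := by
            apply mul_le_mul hch (pow_le_pow_left₀ (hRpos _).le hz2 j)
              (by positivity) (norm_nonneg _)
        _ = ‖z ^ j * h z‖ := by rw [norm_mul, norm_pow]; ring
    have hSdisj : Pairwise (Function.onFun Disjoint S) := by
      have hd : ∀ m n, m < n → Disjoint (S m) (S n) := by
        intro m n hmn
        rw [Set.disjoint_left]
        rintro ⟨z, w⟩ ⟨⟨_, hznot⟩, _⟩ ⟨⟨hzin, _⟩, _⟩
        apply hznot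
        rw [mem_ball_zero_iff]
        exact lt_of_lt_of_le (mem_ball_zero_iff.mp hzin) (hRanti (m + 1) n hmn)
      intro m n hmn
      rcases hmn.lt_or_gt with hlt | hlt
      · exact hd m n hlt
      · exact (hd n m hlt).symm
    -- volume of balls in ℂ
    have hballvol : ∀ s : ℝ, 0 ≤ s →
        volume (ball (0 : ℂ) s) = ENNReal.ofReal (s ^ 2 * Real.pi) := by
      intro s hs
      have hpi : ENNReal.ofReal Real.pi = (NNReal.pi : ℝ≥0∞) := by
        rw [ENNReal.ofReal]
        congr 1
        apply NNReal.coe_injective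
        rw [Real.coe_toNNReal _ Real.pi_pos.le, NNReal.coe_real_pi]
      rw [Complex.volume_ball, ENNReal.ofReal_mul (by positivity),
        ENNReal.ofReal_pow hs, hpi]
    -- constant lower bound for each annulus integral
    set C0 := κ ^ 2 * Real.pi ^ 2 * (3 / 4) * c ^ 2 / 2 ^ (2 * j) with hC0def
    have hC0pos : 0 < C0 := by
      rw [hC0def]
      apply div_pos _ (by positivity)
      have := Real.pi_pos
      apply mul_pos (mul_pos (mul_pos (pow_pos hκpos 2) (pow_pos this 2)) (by norm_num))
        (pow_pos hc 2)
    have hvolS : ∀ n, volume (S n) =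
        ENNReal.ofReal ((R n ^ 2 * Real.pi - (R n / 2) ^ 2 * Real.pi)) *
        ENNReal.ofReal ((c * (R n / 2) ^ j) ^ 2 * Real.pi) := by
      intro n
      simp only [hSdef]
      rw [Measure.volume_eq_prod, Measure.prod_prod]
      have hsub' : ball (0 : ℂ) (R (n + 1)) ⊆ ball (0 : ℂ) (R n) :=
        ball_subset_ball (by rw [hRsucc n]; linarith [hRpos n])
      rw [measure_diff hsub' measurableSet_ball.nullMeasurableSet
            measure_ball_lt_top.ne,
        hballvol _ (hRpos n).le, hballvol _ (hRpos (n + 1)).le,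
        hballvol _ (by positivity), hRsucc n,
        ← ENNReal.ofReal_sub _ (by positivity)]
    have hlow : ∀ n : ℕ, ENNReal.ofReal C0 ≤
        ∫⁻ p in S n, ↑‖(fun p : ℂ × ℂ => ‖iteratedFDeriv ℝ 1
          (fun q : ℂ × ℂ => 1 / (q.1 ^ j * h q.1)) p‖ ^ 2) p‖₊ := by
      intro n
      have hpoint : ∀ p ∈ S n,
          ENNReal.ofReal ((κ / R n ^ (j + 1)) ^ 2) ≤
          ↑‖(fun p : ℂ × ℂ => ‖iteratedFDeriv ℝ 1
            (fun q : ℂ × ℂ => 1 / (q.1 ^ j * h q.1)) p‖ ^ 2) p‖₊ := by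
        rintro ⟨z, w⟩ ⟨⟨hzin, hznot⟩, _⟩
        have hz0 : z ≠ 0 := by
          intro h0
          exact hznot (by rw [h0]; exact mem_ball_self (hRpos _))
        have hzlt : ‖z‖ < R n := mem_ball_zero_iff.mp hzin
        have hzr : ‖z‖ ≤ r := hzlt.le.trans (hRle n)
        have hk := key z w hz0 hzr
        have hznorm : (0:ℝ) < ‖z‖ := norm_pos_iff.mpr hz0
        have hmono : κ / R n ^ (j + 1) ≤ κ / ‖z‖ ^ (j + 1) :=
          div_le_div_of_nonneg_left hκpos.le (pow_pos hznorm _)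
            (pow_le_pow_left₀ hznorm.le hzlt.le _)
        rw [← enorm_eq_nnnorm, Real.enorm_eq_ofReal (sq_nonneg _)]
        apply ENNReal.ofReal_le_ofReal
        have h2 : (0:ℝ) ≤ κ / R n ^ (j + 1) := by positivity
        calc (κ / R n ^ (j + 1)) ^ 2 ≤ (κ / ‖z‖ ^ (j + 1)) ^ 2 :=
              pow_le_pow_left₀ h2 hmono 2
          _ ≤ _ := pow_le_pow_left₀ (by positivity) hk 2
      calc ENNReal.ofReal C0
          = ENNReal.ofReal ((κ / R n ^ (j + 1)) ^ 2) * volume (S n) := by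
            rw [hvolS n,
              ← ENNReal.ofReal_mul (p := (R n ^ 2 * Real.pi - (R n / 2) ^ 2 * Real.pi))
                (by nlinarith [Real.pi_pos, hRpos n]),
              ← ENNReal.ofReal_mul (by positivity),
              aux_alg j (hRpos n), hC0def]
        _ = ∫⁻ _ in S n, ENNReal.ofReal ((κ / R n ^ (j + 1)) ^ 2) :=
            (setLIntegral_const _ _).symm
        _ ≤ _ := setLIntegral_mono' (hSmeas n) hpoint
    -- put it together
    have hfin := hInt.2
    rw [hasFiniteIntegral_def] at hfin
    have htop : (⊤ : ℝ≥0∞) ≤ ∫⁻ p in Ω, ↑‖(fun p : ℂ × ℂ => ‖iteratedFDeriv ℝ 1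
        (fun q : ℂ × ℂ => 1 / (q.1 ^ j * h q.1)) p‖ ^ 2) p‖₊ := by
      calc (⊤ : ℝ≥0∞) = ∑' _ : ℕ, ENNReal.ofReal C0 :=
            (ENNReal.tsum_const_eq_top_of_ne_zero
              (ENNReal.ofReal_pos.mpr hC0pos).ne').symm
        _ ≤ ∑' n : ℕ, ∫⁻ p in S n, ↑‖(fun p : ℂ × ℂ => ‖iteratedFDeriv ℝ 1
              (fun q : ℂ × ℂ => 1 / (q.1 ^ j * h q.1)) p‖ ^ 2) p‖₊ :=
            ENNReal.tsum_le_tsum hlow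
        _ = ∫⁻ p in ⋃ n, S n, ↑‖(fun p : ℂ × ℂ => ‖iteratedFDeriv ℝ 1
              (fun q : ℂ × ℂ => 1 / (q.1 ^ j * h q.1)) p‖ ^ 2) p‖₊ :=
            (lintegral_iUnion hSmeas hSdisj _).symm
        _ ≤ _ := lintegral_mono_set (Set.iUnion_subset hSsub)
    exact lt_irrefl (⊤ : ℝ≥0∞) (lt_of_le_of_lt htop hfin)
end

section
/- Let h be a nonzero bounded holomorphic function on the unit disc D with |h| < 1 whose zero set accumulates at every boundary point of D, and set g = 1 + h. Then the closure of Ω_g = {(z₁,z₂) : z₁ ∈ D, |z₂| < |g(z₁)|} satisfies closure(Ω_g) ⊇ ∂D × {z₂ : |z₂| ≤ 1}. -/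
open Metric

/-- If `h` is a nonzero bounded holomorphic function on the unit disc with
`|h| < 1` whose zero set accumulates at every boundary point, and `g = 1 + h`,
then `closure Ω_g ⊇ ∂D × {|z₂| ≤ 1}`. -/
theorem stmt16 (h : ℂ → ℂ)
    (hhol : DifferentiableOn ℂ h (ball (0 : ℂ) 1))
    (hne : ∃ z ∈ ball (0 : ℂ) 1, h z ≠ 0)
    (hlt : ∀ z ∈ ball (0 : ℂ) 1, ‖h z‖ < 1)
    (hacc : ∀ ζ : ℂ, ‖ζ‖ = 1 →
      ζ ∈ closure {z : ℂ | z ∈ ball (0 : ℂ) 1 ∧ h z = 0})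
    (g : ℂ → ℂ) (hg : g = fun z => 1 + h z)
    (Ω : Set (ℂ × ℂ))
    (hΩ : Ω = {p : ℂ × ℂ | p.1 ∈ ball (0 : ℂ) 1 ∧ ‖p.2‖ < ‖g p.1‖}) :
    {p : ℂ × ℂ | ‖p.1‖ = 1 ∧ ‖p.2‖ ≤ 1} ⊆ closure Ω := by
  rintro ⟨ζ, w⟩ ⟨hζ, hw⟩
  set Z : Set ℂ := {z : ℂ | z ∈ ball (0 : ℂ) 1 ∧ h z = 0} with hZ
  have hsub : Z ×ˢ ball (0 : ℂ) 1 ⊆ Ω := by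
    rintro ⟨z, v⟩ ⟨⟨hz, hz0⟩, hv⟩
    rw [hΩ]
    refine ⟨hz, ?_⟩
    rw [hg]
    simp only [hz0, add_zero]
    simpa using hv
  have hmem : (ζ, w) ∈ closure (Z ×ˢ ball (0 : ℂ) 1) := by
    rw [closure_prod_eq]
    refine ⟨hacc ζ hζ, ?_⟩
    rw [closure_ball (0 : ℂ) one_ne_zero]
    simpa using hw
  exact closure_mono hsub hmem
end
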